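/- arXiv:2309.07275 — 9 statements merged into one kernel-verified Lean document; each statement's English description precedes it below -/
import Mathlib

section
/- Let f : ℝⁿ → ℝ be non-negative and continuously differentiable with ∇f α-Hölder continuous with semi-norm [∇f]_α for some α ∈ (0,1]. Then for every x and every h ∈ ℝⁿ, |h · ∇f(x)| ≤ f(x) + [∇f]_α |h|^{1+α}. -/
open scoped Topology

lemma key_0 {n : ℕ} (f : EuclideanSpace ℝ (Fin n) → ℝ) (α L : ℝ)
    (hα : 0 < α)
    (hf : ContDiff ℝ 1 f) (hf0 : ∀ x, 0 ≤ f x)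
    (hL : ∀ x y, ‖gradient f x - gradient f y‖ ≤ L * ‖x - y‖ ^ α)
    (x h : EuclideanSpace ℝ (Fin n)) (hh : h ≠ 0) :
    -(f x + L * ‖h‖ ^ (1 + α)) ≤ fderiv ℝ f x h := by
  have hnorm : (0:ℝ) < ‖h‖ := norm_pos_iff.2 hh
  have hp : (0:ℝ) < ‖h‖ ^ α := Real.rpow_pos_of_pos hnorm α
  have hL0 : 0 ≤ L := by
    have h1 := hL x (x + h)
    have h2 : ‖x - (x + h)‖ = ‖h‖ := by simp [norm_sub_rev]
    rw [h2] at h1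
    have : (0:ℝ) * (‖h‖ ^ α) ≤ L * ‖h‖ ^ α := by
      simpa using le_trans (norm_nonneg _) h1
    exact le_of_mul_le_mul_right this hp
  -- fderiv = toDual gradient
  have hfd : ∀ y : EuclideanSpace ℝ (Fin n), fderiv ℝ f y = InnerProductSpace.toDual ℝ (EuclideanSpace ℝ (Fin n)) (gradient f y) := by
    intro y
    simp [gradient]
  have hdiff : Differentiable ℝ f := hf.differentiable one_ne_zero
  set g : EuclideanSpace ℝ (Fin n) → ℝ := fun y => f y - (fderiv ℝ f x) y with hg
  have hgd : ∀ y ∈ segment ℝ x (x + h),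
      HasFDerivWithinAt g (fderiv ℝ f y - fderiv ℝ f x) (segment ℝ x (x + h)) y := by
    intro y _
    exact (((hdiff y).hasFDerivAt).sub ((fderiv ℝ f x).hasFDerivAt)).hasFDerivWithinAt
  have hbound : ∀ y ∈ segment ℝ x (x + h),
      ‖fderiv ℝ f y - fderiv ℝ f x‖ ≤ L * ‖h‖ ^ α := by
    intro y hy
    have hyx : ‖y - x‖ ≤ ‖h‖ := by
      obtain ⟨a, b, ha, hb, hab, rfl⟩ := hy
      have hab' : a = 1 - b := by linarith
      subst hab'
      have e : (1 - b) • x + b • (x + h) - x = b • h := by module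
      rw [e, norm_smul, Real.norm_eq_abs, abs_of_nonneg hb]
      nlinarith [norm_nonneg h]
    calc ‖fderiv ℝ f y - fderiv ℝ f x‖
        = ‖gradient f y - gradient f x‖ := by
          rw [hfd y, hfd x, ← map_sub, LinearIsometryEquiv.norm_map]
      _ ≤ L * ‖y - x‖ ^ α := hL y x
      _ ≤ L * ‖h‖ ^ α := by
          exact mul_le_mul_of_nonneg_left
            (Real.rpow_le_rpow (norm_nonneg _) hyx hα.le) hL0
  have hmv := Convex.norm_image_sub_le_of_norm_hasFDerivWithin_le hgd hbound
    (convex_segment x (x + h)) (left_mem_segment ℝ x (x + h))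
    (right_mem_segment ℝ x (x + h))
  have hg_eq : g (x + h) - g x = f (x + h) - f x - (fderiv ℝ f x) h := by
    simp [hg, map_add]; ring
  have hxhx : ‖x + h - x‖ = ‖h‖ := by simp
  rw [hg_eq, hxhx, Real.norm_eq_abs] at hmv
  have hr : L * ‖h‖ ^ α * ‖h‖ = L * ‖h‖ ^ (1 + α) := by
    rw [Real.rpow_add hnorm, Real.rpow_one]; ring
  rw [hr] at hmv
  have := (abs_le.1 hmv).2
  have hx0 := hf0 (x + h)
  linarith

/-- If `f : ℝⁿ → ℝ` is nonnegative and `C¹` with `α`-Hölder gradient (semi-norm `L`),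
then `|h · ∇f(x)| ≤ f x + L * ‖h‖^(1+α)`. -/
theorem stmt_0 {n : ℕ} (f : EuclideanSpace ℝ (Fin n) → ℝ) (α L : ℝ)
    (hα : 0 < α) (hα1 : α ≤ 1)
    (hf : ContDiff ℝ 1 f) (hf0 : ∀ x, 0 ≤ f x)
    (hL : ∀ x y, ‖gradient f x - gradient f y‖ ≤ L * ‖x - y‖ ^ α)
    (x h : EuclideanSpace ℝ (Fin n)) :
    |(inner ℝ h (gradient f x) : ℝ)| ≤ f x + L * ‖h‖ ^ (1 + α) := by
  by_cases hh : h = 0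
  · subst hh
    simp [Real.zero_rpow (by positivity : (1:ℝ) + α ≠ 0)]
    exact hf0 x
  · have hinner : (inner ℝ h (gradient f x) : ℝ) = fderiv ℝ f x h := by
      rw [real_inner_comm]
      have : fderiv ℝ f x = InnerProductSpace.toDual ℝ _ (gradient f x) := by
        simp [gradient]
      rw [this, InnerProductSpace.toDual_apply_apply]
    rw [hinner, abs_le]
    constructor
    · exact key_0 f α L hα hf hf0 hL x h hh
    · have hneg := key_0 f α L hα hf hf0 hL x (-h) (neg_ne_zero.2 hh)
      rw [map_neg, norm_neg] at hneg
      linarith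
end

section
/- Let f : ℝⁿ → ℝ be non-negative and C¹ with ∇f α-Hölder continuous for some α ∈ (0,1]. Then √f is Hölder continuous of exponent (1+α)/2 on ℝⁿ, i.e. there is a constant C with |√f(x) − √f(y)| ≤ C|x−y|^{(1+α)/2} for all x,y. -/
open Real

local notation "⟪" x ", " y "⟫" => @inner ℝ _ _ x y

section AuxHolder

variable {n : ℕ}

lemma inner_grad' (f : EuclideanSpace ℝ (Fin n) → ℝ) (x h : EuclideanSpace ℝ (Fin n)) :
    ⟪gradient f x, h⟫ = fderiv ℝ f x h := by
  simp [gradient, InnerProductSpace.toDual_symm_apply]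

lemma taylorA' {f : EuclideanSpace ℝ (Fin n) → ℝ} {α L : ℝ} (hα : 0 < α) (hL0 : 0 ≤ L)
    (hf : ContDiff ℝ 1 f)
    (hL : ∀ x y, ‖gradient f x - gradient f y‖ ≤ L * ‖x - y‖ ^ α)
    (x h : EuclideanSpace ℝ (Fin n)) :
    |f (x + h) - f x - ⟪gradient f x, h⟫| ≤ L * ‖h‖ ^ (1 + α) := by
  rcases eq_or_ne h 0 with rfl | hh
  · simp
    positivity
  set K : ℝ := ⟪gradient f x, h⟫ with hK
  set g : ℝ → ℝ := fun t => f (x + t • h) - t * K with hg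
  have hder : ∀ t : ℝ, HasDerivAt g (fderiv ℝ f (x + t • h) h - K) t := by
    intro t
    have hc : HasDerivAt (fun t : ℝ => x + t • h) h t := by
      simpa using ((hasDerivAt_id t).smul_const h).const_add x
    have hF : HasFDerivAt f (fderiv ℝ f (x + t • h)) (x + t • h) :=
      (hf.differentiable one_ne_zero (x + t • h)).hasFDerivAt
    have := hF.comp_hasDerivAt t hc
    exact this.sub (hasDerivAt_mul_const K)
  have hbound : ∀ t ∈ Set.Ico (0:ℝ) 1,
      ‖fderiv ℝ f (x + t • h) h - K‖ ≤ L * ‖h‖ ^ (1 + α) := by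
    intro t ht
    have e1 : fderiv ℝ f (x + t • h) h - K = ⟪gradient f (x + t • h) - gradient f x, h⟫ := by
      rw [inner_sub_left, inner_grad', inner_grad', hK, inner_grad']
    rw [e1, Real.norm_eq_abs]
    calc |⟪gradient f (x + t • h) - gradient f x, h⟫|
        ≤ ‖gradient f (x + t • h) - gradient f x‖ * ‖h‖ := abs_real_inner_le_norm _ _
      _ ≤ (L * ‖x + t • h - x‖ ^ α) * ‖h‖ := by
          gcongr; exact hL _ _
      _ ≤ L * ‖h‖ ^ (1 + α) := by
          have e2 : ‖x + t • h - x‖ = |t| * ‖h‖ := by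
            simp [norm_smul]
          rw [e2]
          have e3 : (|t| * ‖h‖) ^ α = |t| ^ α * ‖h‖ ^ α :=
            Real.mul_rpow (abs_nonneg t) (norm_nonneg h)
          have e4 : |t| ^ α ≤ 1 :=
            Real.rpow_le_one (abs_nonneg t) (by rw [abs_of_nonneg ht.1]; exact ht.2.le) hα.le
          have e5 : ‖h‖ ^ (1 + α) = ‖h‖ ^ α * ‖h‖ := by
            rw [add_comm, Real.rpow_add_one (norm_ne_zero_iff.2 hh)]
          have h1 : |t| ^ α * ‖h‖ ^ α ≤ ‖h‖ ^ α := by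
            nlinarith [Real.rpow_nonneg (norm_nonneg h) α, Real.rpow_nonneg (abs_nonneg t) α]
          rw [e3, e5, mul_assoc, mul_assoc]
          refine mul_le_mul_of_nonneg_left ?_ hL0
          rw [← mul_assoc]
          exact mul_le_mul_of_nonneg_right h1 (norm_nonneg h)
  have hmain := norm_image_sub_le_of_norm_deriv_le_segment_01'
    (f := g) (f' := fun t => fderiv ℝ f (x + t • h) h - K)
    (fun t _ => (hder t).hasDerivWithinAt) hbound
  have e6 : g 1 = f (x + h) - K := by simp [hg]
  have e7 : g 0 = f x := by simp [hg]
  rw [e6, e7, Real.norm_eq_abs] at hmain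
  convert hmain using 2
  ring

lemma key0' {f : EuclideanSpace ℝ (Fin n) → ℝ} {α L : ℝ} (hα : 0 < α) (hL0 : 0 ≤ L)
    (hf : ContDiff ℝ 1 f) (hf0 : ∀ x, 0 ≤ f x)
    (hL : ∀ x y, ‖gradient f x - gradient f y‖ ≤ L * ‖x - y‖ ^ α)
    (x : EuclideanSpace ℝ (Fin n)) {t : ℝ} (ht : 0 < t) :
    ‖gradient f x‖ ≤ f x / t + L * t ^ α := by
  set g := gradient f x with hgdef
  rcases eq_or_ne g 0 with h0 | h0
  · rw [h0]; simp only [norm_zero]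
    have := hf0 x
    positivity
  · have hgn : 0 < ‖g‖ := norm_pos_iff.2 h0
    set h : EuclideanSpace ℝ (Fin n) := -((t / ‖g‖) • g) with hh
    have hnh : ‖h‖ = t := by
      rw [hh, norm_neg, norm_smul, Real.norm_eq_abs, abs_of_nonneg (by positivity)]
      field_simp
    have hih : ⟪g, h⟫ = -(t * ‖g‖) := by
      rw [hh, inner_neg_right, real_inner_smul_right, real_inner_self_eq_norm_sq]
      field_simp
    have hT := taylorA' hα hL0 hf hL x h
    rw [← hgdef, hih, hnh] at hT
    have h1 : 0 ≤ f (x + h) := hf0 _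
    have h2 : f (x + h) - f x - (-(t * ‖g‖)) ≤ L * t ^ (1 + α) := (abs_le.1 hT).2
    have h3 : t ^ (1 + α) = t * t ^ α := by
      rw [Real.rpow_add ht, Real.rpow_one]
    rw [h3] at h2
    rw [div_add' _ _ _ ht.ne', le_div_iff₀ ht]
    nlinarith

lemma gradBound' {f : EuclideanSpace ℝ (Fin n) → ℝ} {α L : ℝ} (hα : 0 < α) (hL1 : 1 ≤ L)
    (hf : ContDiff ℝ 1 f) (hf0 : ∀ x, 0 ≤ f x)
    (hL : ∀ x y, ‖gradient f x - gradient f y‖ ≤ L * ‖x - y‖ ^ α)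
    (x : EuclideanSpace ℝ (Fin n)) :
    ‖gradient f x‖ ≤ 2 * L ^ (1/(1+α)) * f x ^ (α/(1+α)) := by
  have hL0 : (0:ℝ) < L := lt_of_lt_of_le one_pos hL1
  have h1α : (0:ℝ) < 1 + α := by linarith
  rcases eq_or_lt_of_le (hf0 x) with h0 | h0
  · rw [← h0, Real.zero_rpow (by positivity : α/(1+α) ≠ 0), mul_zero]
    by_contra hcon
    push_neg at hcon
    have hgn : 0 < ‖gradient f x‖ := lt_of_le_of_lt (by positivity) hcon
    set t : ℝ := (‖gradient f x‖ / (2*L)) ^ (1/α) with htdef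
    have htpos : 0 < t := Real.rpow_pos_of_pos (by positivity) _
    have hk := key0' hα hL0.le hf hf0 hL x htpos
    rw [← h0, zero_div, zero_add] at hk
    have e1 : t ^ α = ‖gradient f x‖ / (2*L) := by
      rw [htdef, ← Real.rpow_mul (by positivity), one_div, inv_mul_cancel₀ hα.ne', Real.rpow_one]
    rw [e1] at hk
    have : L * (‖gradient f x‖ / (2*L)) = ‖gradient f x‖ / 2 := by
      field_simp
    rw [this] at hk
    linarith
  · set t : ℝ := (f x / L) ^ (1/(1+α)) with htdef
    have htpos : 0 < t := Real.rpow_pos_of_pos (by positivity) _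
    have hk := key0' hα hL0.le hf hf0 hL x htpos
    have hfLpos : 0 < f x / L := by positivity
    have hfxβ : (0:ℝ) < f x ^ (1/(1+α)) := Real.rpow_pos_of_pos h0 _
    have hsum : f x ^ (α/(1+α)) * f x ^ (1/(1+α)) = f x := by
      rw [← Real.rpow_add h0, ← add_div, show α+1 = 1+α from add_comm α 1,
        div_self h1α.ne', Real.rpow_one]
    have e1 : t ^ α = f x ^ (α/(1+α)) / L ^ (α/(1+α)) := by
      rw [htdef, ← Real.rpow_mul hfLpos.le, show 1/(1+α)*α = α/(1+α) by ring,
        Real.div_rpow (hf0 x) hL0.le]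
    have e2 : f x / t = L ^ (1/(1+α)) * f x ^ (α/(1+α)) := by
      have ht' : t = f x ^ (1/(1+α)) / L ^ (1/(1+α)) := by
        rw [htdef, Real.div_rpow (hf0 x) hL0.le]
      rw [ht', div_div_eq_mul_div, div_eq_iff hfxβ.ne', mul_assoc, hsum]
      ring
    have e3 : L * (f x ^ (α/(1+α)) / L ^ (α/(1+α))) = L ^ (1/(1+α)) * f x ^ (α/(1+α)) := by
      rw [show (1:ℝ)/(1+α) = 1 - α/(1+α) by
        rw [eq_sub_iff_add_eq, ← add_div, add_comm 1 α, show α+1 = 1+α from add_comm α 1,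
          div_self h1α.ne'], Real.rpow_sub hL0, Real.rpow_one]
      ring
    rw [e1, e2, e3] at hk
    linarith

lemma keyHolder {f : EuclideanSpace ℝ (Fin n) → ℝ} {α L : ℝ} (hα : 0 < α) (hα1 : α ≤ 1)
    (hL1 : 1 ≤ L)
    (hf : ContDiff ℝ 1 f) (hf0 : ∀ x, 0 ≤ f x)
    (hL : ∀ x y, ‖gradient f x - gradient f y‖ ≤ L * ‖x - y‖ ^ α)
    (x y : EuclideanSpace ℝ (Fin n)) :
    Real.sqrt (f x) - Real.sqrt (f y) ≤ 3 * L * ‖x - y‖ ^ ((1+α)/2) := by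
  have hL0 : (0:ℝ) < L := lt_of_lt_of_le one_pos hL1
  have h1α : (0:ℝ) < 1 + α := by linarith
  have hrn : 0 ≤ ‖x - y‖ := norm_nonneg _
  have hRHS0 : 0 ≤ 3 * L * ‖x - y‖ ^ ((1+α)/2) := by positivity
  rcases le_or_gt (f x) (f y) with hxy | hxy
  · have := Real.sqrt_le_sqrt hxy
    linarith
  rcases eq_or_ne x y with rfl | hne
  · simp at hxy
  have hr : 0 < ‖x - y‖ := norm_sub_pos_iff.2 hne
  set r := ‖x - y‖ with hrdef
  have hsq : Real.sqrt (r ^ (1+α)) = r ^ ((1+α)/2) := by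
    rw [Real.sqrt_eq_rpow, ← Real.rpow_mul hr.le]
    congr 1
    ring
  rcases le_or_gt (f x) (9 * L * r ^ (1+α)) with hcase | hcase
  · -- small case
    have h1 : Real.sqrt (f x) ≤ Real.sqrt (9 * L * r ^ (1+α)) := Real.sqrt_le_sqrt hcase
    have h2 : Real.sqrt (9 * L * r ^ (1+α)) = Real.sqrt (9*L) * r ^ ((1+α)/2) := by
      rw [Real.sqrt_mul (by positivity), hsq]
    have h3 : Real.sqrt (9*L) ≤ 3 * L := by
      have h3' : Real.sqrt (9*L) ≤ Real.sqrt ((3*L)^2) := Real.sqrt_le_sqrt (by nlinarith)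
      rwa [Real.sqrt_sq (by positivity)] at h3'
    have h4 : Real.sqrt (f x) ≤ 3 * L * r ^ ((1+α)/2) := by
      calc Real.sqrt (f x) ≤ Real.sqrt (9*L) * r ^ ((1+α)/2) := by rw [← h2]; exact h1
        _ ≤ 3 * L * r ^ ((1+α)/2) :=
            mul_le_mul_of_nonneg_right h3 (Real.rpow_nonneg hrn _)
    have := Real.sqrt_nonneg (f y)
    linarith
  · -- large case
    have hfx : 0 < f x := lt_trans (by positivity) hcase
    have hsx : 0 < Real.sqrt (f x) := Real.sqrt_pos.2 hfx
    -- step 1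
    have s1 : Real.sqrt (f x) - Real.sqrt (f y) ≤ (f x - f y) / Real.sqrt (f x) := by
      rw [le_div_iff₀ hsx]
      nlinarith [Real.sq_sqrt (hf0 x), Real.sq_sqrt (hf0 y),
        Real.sqrt_le_sqrt hxy.le, Real.sqrt_nonneg (f y)]
    -- step 2
    have s2 : f x - f y ≤ ‖gradient f x‖ * r + L * r ^ (1+α) := by
      have hT := taylorA' hα hL0.le hf hL x (y - x)
      rw [add_sub_cancel, show ‖y - x‖ = r by rw [hrdef, norm_sub_rev]] at hT
      have := (abs_le.1 hT).1
      have hI := abs_real_inner_le_norm (gradient f x) (y - x)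
      rw [show ‖y - x‖ = r by rw [hrdef, norm_sub_rev]] at hI
      have := neg_abs_le (⟪gradient f x, y - x⟫)
      nlinarith [abs_le.1 hT]
    have s3 := gradBound' hα hL1 hf hf0 hL x
    -- step 4 : f x ^ (α/(1+α)) / sqrt (f x) ≤ r ^ ((α-1)/2)
    have hexp : α/(1+α) - 1/2 ≤ 0 := by
      rw [sub_nonpos, div_le_div_iff₀ h1α two_pos]
      linarith
    have s4 : f x ^ (α/(1+α)) / Real.sqrt (f x) ≤ r ^ ((α-1)/2) := by
      have e1 : f x ^ (α/(1+α)) / Real.sqrt (f x) = f x ^ (α/(1+α) - 1/2) := by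
        rw [Real.sqrt_eq_rpow, ← Real.rpow_sub hfx]
      rw [e1]
      calc f x ^ (α/(1+α) - 1/2) ≤ (9 * L * r ^ (1+α)) ^ (α/(1+α) - 1/2) :=
            Real.rpow_le_rpow_of_nonpos (by positivity) hcase.le hexp
        _ = (9*L) ^ (α/(1+α) - 1/2) * (r ^ (1+α)) ^ (α/(1+α) - 1/2) := by
            rw [← Real.mul_rpow (by positivity) (by positivity)]
        _ ≤ 1 * (r ^ (1+α)) ^ (α/(1+α) - 1/2) :=
            mul_le_mul_of_nonneg_right
              (Real.rpow_le_one_of_one_le_of_nonpos (by linarith) hexp)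
              (Real.rpow_nonneg (by positivity) _)
        _ = r ^ ((α-1)/2) := by
            rw [one_mul, ← Real.rpow_mul hr.le]
            congr 1
            field_simp
            ring
    -- combine
    set β := 1/(1+α) with hβ
    set γ := α/(1+α) with hγ
    have s2' : f x - f y ≤ 2 * L ^ β * f x ^ γ * r + L * r ^ (1+α) := by
      have := mul_le_mul_of_nonneg_right s3 hr.le
      linarith
    have s5 : (f x - f y)/Real.sqrt (f x) ≤
        (2 * L ^ β * f x ^ γ * r + L * r ^ (1+α)) / Real.sqrt (f x) := by
      gcongr
    have dist : (2 * L ^ β * f x ^ γ * r + L * r ^ (1+α)) / Real.sqrt (f x)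
        = 2 * L ^ β * (f x ^ γ / Real.sqrt (f x)) * r + L * r ^ (1+α) / Real.sqrt (f x) := by
      field_simp
    have hLβ : L ^ β ≤ L := by
      calc L ^ β ≤ L ^ (1:ℝ) := Real.rpow_le_rpow_of_exponent_le hL1
            (by rw [hβ]; rw [div_le_one h1α]; linarith)
        _ = L := Real.rpow_one L
    have hB : r ^ ((α-1)/2) * r = r ^ ((1+α)/2) := by
      rw [← Real.rpow_add_one hr.ne' ((α-1)/2)]
      congr 1
      ring
    have term1 : 2 * L ^ β * (f x ^ γ / Real.sqrt (f x)) * r ≤ 2 * L * r ^ ((1+α)/2) := by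
      calc 2 * L ^ β * (f x ^ γ / Real.sqrt (f x)) * r ≤ 2 * L ^ β * r ^ ((α-1)/2) * r := by
            refine mul_le_mul_of_nonneg_right ?_ hr.le
            refine mul_le_mul_of_nonneg_left s4 (by positivity)
        _ = 2 * L ^ β * r ^ ((1+α)/2) := by rw [mul_assoc, hB]
        _ ≤ 2 * L * r ^ ((1+α)/2) :=
            mul_le_mul_of_nonneg_right (by nlinarith [Real.rpow_nonneg hL0.le β])
              (Real.rpow_nonneg hr.le _)
    have term2 : L * r ^ (1+α) / Real.sqrt (f x) ≤ L * r ^ ((1+α)/2) := by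
      rw [div_le_iff₀ hsx]
      have h5 : r ^ ((1+α)/2) ≤ Real.sqrt (f x) := by
        calc r ^ ((1+α)/2) = 1 * r ^ ((1+α)/2) := (one_mul _).symm
          _ ≤ Real.sqrt (9*L) * r ^ ((1+α)/2) := by
              refine mul_le_mul_of_nonneg_right ?_ (Real.rpow_nonneg hr.le _)
              rw [show (1:ℝ) = Real.sqrt 1 from Real.sqrt_one.symm]
              exact Real.sqrt_le_sqrt (by linarith)
          _ = Real.sqrt (9 * L * r ^ (1+α)) := by
              rw [Real.sqrt_mul (by positivity : (0:ℝ) ≤ 9*L) (r ^ (1+α)), hsq]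
          _ ≤ Real.sqrt (f x) := Real.sqrt_le_sqrt hcase.le
      have hsplit : r ^ (1+α) = r ^ ((1+α)/2) * r ^ ((1+α)/2) := by
        rw [← Real.rpow_add hr]
        congr 1
        ring
      calc L * r ^ (1+α) = L * (r ^ ((1+α)/2) * r ^ ((1+α)/2)) := by rw [hsplit]
        _ ≤ L * (r ^ ((1+α)/2) * Real.sqrt (f x)) := by
            refine mul_le_mul_of_nonneg_left ?_ hL0.le
            exact mul_le_mul_of_nonneg_left h5 (Real.rpow_nonneg hr.le _)
        _ = L * r ^ ((1+α)/2) * Real.sqrt (f x) := by ring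
    rw [dist] at s5
    calc Real.sqrt (f x) - Real.sqrt (f y) ≤ (f x - f y) / Real.sqrt (f x) := s1
      _ ≤ 2 * L ^ β * (f x ^ γ / Real.sqrt (f x)) * r + L * r ^ (1+α) / Real.sqrt (f x) := by
          calc (f x - f y) / Real.sqrt (f x)
              ≤ (2 * L ^ β * f x ^ γ * r + L * r ^ (1+α)) / Real.sqrt (f x) := by gcongr
            _ = _ := dist
      _ ≤ 2 * L * r ^ ((1+α)/2) + L * r ^ ((1+α)/2) := add_le_add term1 term2
      _ = 3 * L * r ^ ((1+α)/2) := by ring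

end AuxHolder

/-- If `f : ℝⁿ → ℝ` is nonnegative and `C¹` with `α`-Hölder gradient, then `√f` is
Hölder continuous of exponent `(1+α)/2`. -/
theorem stmt_2 {n : ℕ} (f : EuclideanSpace ℝ (Fin n) → ℝ) (α L : ℝ)
    (hα : 0 < α) (hα1 : α ≤ 1)
    (hf : ContDiff ℝ 1 f) (hf0 : ∀ x, 0 ≤ f x)
    (hL : ∀ x y, ‖gradient f x - gradient f y‖ ≤ L * ‖x - y‖ ^ α) :
    ∃ C : ℝ, ∀ x y, |Real.sqrt (f x) - Real.sqrt (f y)| ≤ C * ‖x - y‖ ^ ((1 + α) / 2) := by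
  set L' := max L 1 with hL'def
  have hL1 : 1 ≤ L' := le_max_right _ _
  have hL' : ∀ x y, ‖gradient f x - gradient f y‖ ≤ L' * ‖x - y‖ ^ α := fun x y =>
    (hL x y).trans (mul_le_mul_of_nonneg_right (le_max_left _ _)
      (Real.rpow_nonneg (norm_nonneg _) α))
  refine ⟨3 * L', fun x y => ?_⟩
  have k1 := keyHolder hα hα1 hL1 hf hf0 hL' x y
  have k2 := keyHolder hα hα1 hL1 hf hf0 hL' y x
  rw [norm_sub_rev y x] at k2
  rw [abs_sub_le_iff]
  exact ⟨by linarith, by linarith⟩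
end

section
/- Let f : ℝⁿ → ℝ be non-negative, α-Hölder continuous with semi-norm L = [f]_α, let s > 1 and ε > 0. Then for all x, y ∈ ℝⁿ, |f(x)^s − f(y)^s| ≤ ((1+ε) L^s / ((1+ε)^{1/(s−1)} − 1)^{s−1}) · |x−y|^{sα} + ε · max{f(x)^s, f(y)^s}. -/
lemma aux_convex (a d B s ε : ℝ) (ha : 0 ≤ a) (hd : 0 ≤ d) (hdB : d ≤ B)
    (hs : 1 < s) (hε : 0 < ε) :
    (a + d) ^ s - a ^ s ≤ (1 + ε) / ((1 + ε) ^ (1 / (s - 1)) - 1) ^ (s - 1) * B ^ s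
      + ε * a ^ s := by
  have hs1 : 0 < s - 1 := by linarith
  set t : ℝ := (1 + ε) ^ (1 / (s - 1)) with htdef
  have ht1 : 1 < t := by
    rw [htdef, Real.one_lt_rpow_iff_of_pos (by linarith)]
    exact Or.inl ⟨by linarith, by positivity⟩
  have ht0 : 0 < t := by linarith
  set l : ℝ := 1 / t with hldef
  have hl0 : 0 < l := by positivity
  have hl1 : l < 1 := by rw [hldef, div_lt_one ht0]; exact ht1
  have h1l : 0 < 1 - l := by linarith
  have hte : t ^ (1 - s) = (1 + ε)⁻¹ := by
    rw [htdef, ← Real.rpow_mul (by linarith : (0:ℝ) ≤ 1 + ε)]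
    have : 1 / (s - 1) * (1 - s) = -1 := by field_simp; ring
    rw [this, Real.rpow_neg_one]
  have hcv := (convexOn_rpow (le_of_lt hs)).2
    (Set.mem_Ici.mpr (show (0:ℝ) ≤ a / l by positivity))
    (Set.mem_Ici.mpr (show (0:ℝ) ≤ d / (1 - l) by positivity))
    (le_of_lt hl0) (le_of_lt h1l) (by ring)
  simp only [smul_eq_mul] at hcv
  have hsum : l * (a / l) + (1 - l) * (d / (1 - l)) = a + d := by field_simp
  rw [hsum] at hcv
  have hrw1 : l * (a / l) ^ s = l ^ (1 - s) * a ^ s := by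
    rw [Real.div_rpow ha (le_of_lt hl0), Real.rpow_sub hl0, Real.rpow_one]
    field_simp
  have hrw2 : (1 - l) * (d / (1 - l)) ^ s = (1 - l) ^ (1 - s) * d ^ s := by
    rw [Real.div_rpow hd (le_of_lt h1l), Real.rpow_sub h1l, Real.rpow_one]
    field_simp
  rw [hrw1, hrw2] at hcv
  have hlc : l ^ (1 - s) = 1 + ε := by
    rw [hldef, Real.div_rpow zero_le_one (le_of_lt ht0), Real.one_rpow, hte,
      one_div, inv_inv]
  have h1lc : (1 - l) ^ (1 - s) = (1 + ε) / (t - 1) ^ (s - 1) := by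
    have h1le : 1 - l = (t - 1) / t := by rw [hldef]; field_simp
    rw [h1le, Real.div_rpow (by linarith) (le_of_lt ht0), hte,
      show (1:ℝ) - s = -(s - 1) by ring,
      Real.rpow_neg (by linarith : (0:ℝ) ≤ t - 1)]
    rw [div_inv_eq_mul, inv_mul_eq_div]
  rw [hlc, h1lc] at hcv
  have hdB' : d ^ s ≤ B ^ s := Real.rpow_le_rpow hd hdB (by linarith)
  have hcoef : 0 ≤ (1 + ε) / (t - 1) ^ (s - 1) := by
    have := Real.rpow_pos_of_pos (show (0:ℝ) < t - 1 by linarith) (s - 1)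
    positivity
  have := mul_le_mul_of_nonneg_left hdB' hcoef
  nlinarith [this, hcv]

lemma aux_onesided {n : ℕ} (f : EuclideanSpace ℝ (Fin n) → ℝ) (α L s ε : ℝ)
    (hα : 0 < α) (hs : 1 < s) (hε : 0 < ε)
    (hf0 : ∀ x, 0 ≤ f x)
    (hL : ∀ x y, |f x - f y| ≤ L * ‖x - y‖ ^ α)
    (x y : EuclideanSpace ℝ (Fin n)) (hxy : x ≠ y) (hle : f y ≤ f x) :
    |f x ^ s - f y ^ s| ≤
      ((1 + ε) * L ^ s / ((1 + ε) ^ (1 / (s - 1)) - 1) ^ (s - 1)) * ‖x - y‖ ^ (s * α)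
        + ε * max (f x ^ s) (f y ^ s) := by
  have hnorm : 0 < ‖x - y‖ := by
    rw [norm_pos_iff]; exact sub_ne_zero.mpr hxy
  have hL0 : 0 ≤ L := by
    have h1 := hL x y
    nlinarith [abs_nonneg (f x - f y), Real.rpow_pos_of_pos hnorm α]
  have hd : f x - f y ≤ L * ‖x - y‖ ^ α := by
    have := hL x y; rwa [abs_of_nonneg (by linarith)] at this
  have key := aux_convex (f y) (f x - f y) (L * ‖x - y‖ ^ α) s ε (hf0 y)
    (by linarith) hd hs hε
  rw [add_sub_cancel] at key
  have hB : (L * ‖x - y‖ ^ α) ^ s = L ^ s * ‖x - y‖ ^ (s * α) := by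
    rw [Real.mul_rpow hL0 (Real.rpow_nonneg (norm_nonneg _) α),
      ← Real.rpow_mul (norm_nonneg _), mul_comm α s]
  rw [hB] at key
  have habs : |f x ^ s - f y ^ s| = f x ^ s - f y ^ s :=
    abs_of_nonneg (sub_nonneg.mpr (Real.rpow_le_rpow (hf0 y) hle (by linarith)))
  rw [habs]
  have hmax : f y ^ s ≤ max (f x ^ s) (f y ^ s) := le_max_right _ _
  calc f x ^ s - f y ^ s
      ≤ (1 + ε) / ((1 + ε) ^ (1 / (s - 1)) - 1) ^ (s - 1) *
          (L ^ s * ‖x - y‖ ^ (s * α)) + ε * f y ^ s := key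
    _ = ((1 + ε) * L ^ s / ((1 + ε) ^ (1 / (s - 1)) - 1) ^ (s - 1)) *
          ‖x - y‖ ^ (s * α) + ε * f y ^ s := by ring
    _ ≤ _ := by nlinarith

/-- Lemma 2.5: for nonnegative `α`-Hölder `f` with semi-norm `L`, `s > 1`, `ε > 0`,
`|f(x)^s − f(y)^s| ≤ (1+ε)L^s/((1+ε)^(1/(s−1))−1)^(s−1) · |x−y|^(sα) + ε·max{f(x)^s, f(y)^s}`. -/
theorem stmt_3 {n : ℕ} (f : EuclideanSpace ℝ (Fin n) → ℝ) (α L s ε : ℝ)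
    (hα : 0 < α) (hα1 : α ≤ 1) (hs : 1 < s) (hε : 0 < ε)
    (hf0 : ∀ x, 0 ≤ f x)
    (hL : ∀ x y, |f x - f y| ≤ L * ‖x - y‖ ^ α)
    (x y : EuclideanSpace ℝ (Fin n)) :
    |f x ^ s - f y ^ s| ≤
      ((1 + ε) * L ^ s / ((1 + ε) ^ (1 / (s - 1)) - 1) ^ (s - 1)) * ‖x - y‖ ^ (s * α)
        + ε * max (f x ^ s) (f y ^ s) := by
  by_cases hxy : x = y
  · subst hxy
    simp only [sub_self, abs_zero, norm_zero]
    rw [Real.zero_rpow (by positivity : s * α ≠ 0)]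
    have : 0 ≤ f x ^ s := Real.rpow_nonneg (hf0 x) s
    have hm : 0 ≤ max (f x ^ s) (f x ^ s) := le_max_of_le_left this
    nlinarith
  · rcases le_total (f y) (f x) with h | h
    · exact aux_onesided f α L s ε hα hs hε hf0 hL x y hxy h
    · have := aux_onesided f α L s ε hα hs hε hf0 hL y x (Ne.symm hxy) h
      rwa [abs_sub_comm, norm_sub_rev, max_comm] at this
end

section
/- Let ℓ be an odd positive integer and s = (ℓ+1)/2. Then there exist real numbers η₁,…,η_s and non-negative reals q₁,…,q_s such that for every odd j with 1 ≤ j ≤ ℓ, the sum Σ_{i=1}^{s} q_i η_i^j equals 0 if j < ℓ and equals 1 if j = ℓ. -/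
open Polynomial Finset

private lemma lagrange_key (s : ℕ) (v : Fin s → ℝ) (hv : Function.Injective v)
    (m : ℕ) (hm : m < s) :
    ∑ i, (v i) ^ m * (∏ j ∈ Finset.univ.erase i, (v i - v j))⁻¹ =
      if m = s - 1 then 1 else 0 := by
  have hinj : Set.InjOn v (Finset.univ : Finset (Fin s)) := hv.injOn
  have hcard : (Finset.univ : Finset (Fin s)).card = s := Finset.card_fin s
  have hdeg : ((X : ℝ[X]) ^ m).degree < (Finset.univ : Finset (Fin s)).card := by
    rw [degree_X_pow, hcard]; exact_mod_cast hm
  have hinterp := Lagrange.eq_interpolate hinj hdeg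
  have hc := congrArg (fun p : ℝ[X] => p.coeff (s - 1)) hinterp
  simp only [Lagrange.interpolate_apply, Polynomial.finset_sum_coeff, coeff_C_mul,
    coeff_X_pow, eval_pow, eval_X] at hc
  have hc2 : (if m = s - 1 then (1:ℝ) else 0) =
      ∑ x : Fin s, v x ^ m * (Lagrange.basis Finset.univ v x).coeff (s - 1) := by
    rw [← hc]; simp [eq_comm]
  rw [hc2]
  refine Finset.sum_congr rfl fun i _ => ?_
  congr 1
  -- coeff (s-1) of basis = leading coeff = product of inverses
  have hb : (Lagrange.basis Finset.univ v i).natDegree = s - 1 := by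
    rw [Lagrange.natDegree_basis hinj (Finset.mem_univ i), hcard]
  rw [← hb, ← Polynomial.leadingCoeff]
  rw [Lagrange.basis, Polynomial.leadingCoeff_prod]
  rw [← Finset.prod_inv_distrib]
  refine Finset.prod_congr rfl fun j hj => ?_
  have hij : v i ≠ v j := fun h => (Finset.mem_erase.mp hj).1 (hv h).symm
  rw [Lagrange.basisDivisor, leadingCoeff_mul, leadingCoeff_C,
    leadingCoeff_X_sub_C, mul_one]

/-- Lemma 3.5: for odd `ℓ` and `s = (ℓ+1)/2` there are reals `η i` and nonnegative `q i`
with `Σ q i * η i ^ j = 0` for odd `j < ℓ` and `= 1` for `j = ℓ`. -/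
theorem stmt_5 (ℓ : ℕ) (hℓ : Odd ℓ) (hpos : 0 < ℓ) (s : ℕ) (hs : s = (ℓ + 1) / 2) :
    ∃ (η q : Fin s → ℝ), (∀ i, 0 ≤ q i) ∧
      ∀ j : ℕ, Odd j → 1 ≤ j → j ≤ ℓ →
        (∑ i, q i * η i ^ j) = if j < ℓ then 0 else 1 := by
  obtain ⟨k, hk⟩ := hℓ
  have hsk : s = k + 1 := by omega
  have hℓs : ℓ = 2 * s - 1 := by omega
  set t : Fin s → ℝ := fun i => (i : ℝ) + 1 with ht
  have htpos : ∀ i, 0 < t i := fun i => by positivity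
  have hvinj : Function.Injective t := by
    intro a b hab
    have : (a : ℝ) = b := by simpa [ht] using hab
    exact_mod_cast Fin.val_injective (by exact_mod_cast this)
  set p : Fin s → ℝ := fun i => (∏ j ∈ Finset.univ.erase i, (t i - t j))⁻¹ with hp
  refine ⟨fun i => if 0 ≤ p i then Real.sqrt (t i) else -Real.sqrt (t i),
    fun i => |p i| / Real.sqrt (t i), fun i => ?_, ?_⟩
  · positivity
  · intro j hj h1 hjl
    obtain ⟨m, hm⟩ := hj
    have hms : m < s := by omega
    have hterm : ∀ i : Fin s,
        (|p i| / Real.sqrt (t i)) *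
          (if 0 ≤ p i then Real.sqrt (t i) else -Real.sqrt (t i)) ^ j
        = (t i) ^ m * p i := by
      intro i
      have hst : Real.sqrt (t i) ≠ 0 := by positivity
      have hsq : Real.sqrt (t i) ^ 2 = t i := Real.sq_sqrt (htpos i).le
      have hjm : j = 2 * m + 1 := by omega
      by_cases hpi : 0 ≤ p i
      · rw [if_pos hpi, hjm, pow_succ, pow_mul, hsq, abs_of_nonneg hpi]
        field_simp
      · rw [if_neg hpi, hjm, pow_succ, Even.neg_pow (even_two_mul m), pow_mul, hsq,
          abs_of_neg (lt_of_not_ge hpi)]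
        field_simp
    rw [Finset.sum_congr rfl fun i _ => hterm i]
    have hkey := lagrange_key s t hvinj m hms
    rw [show ∑ i, t i ^ m * p i = ∑ i, (t i) ^ m * (∏ j ∈ Finset.univ.erase i, (t i - t j))⁻¹
      from rfl, hkey]
    rcases Nat.lt_or_ge j ℓ with h | h
    · have h2 : ¬ m = s - 1 := by omega
      rw [if_pos h, if_neg h2]
    · have hje : j = ℓ := le_antisymm hjl h
      have h2 : m = s - 1 := by omega
      have h3 : ¬ j < ℓ := by omega
      rw [if_neg h3, if_pos h2]
end

section
/- Let G be a connected infinite graph in which every vertex has degree at most b for some natural number b. Then the chromatic number of G is at most b. -/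
/-!
In a connected infinite graph every nonempty finite vertex set `s` contains a vertex with a
neighbour outside `s`, hence with at most `b - 1` neighbours inside `s`. Removing such a vertex,
colouring the rest and giving it a colour unused by its neighbours in `s` colours `s` greedily
with `b` colours. The colourings of the finite vertex sets are assembled into a
colouring of the whole graph by compactness (de Bruijn–Erdős).
-/

open Finset Function

namespace SimpleGraph

variable {V : Type*} {G : SimpleGraph V}

theorem Connected.exists_adj_notMem_of_infinite [Infinite V] (hG : G.Connected) {s : Finset V}
    (hs : s.Nonempty) : ∃ v ∈ s, ∃ w ∉ s, G.Adj v w := by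
  obtain ⟨u, hu⟩ := hs
  obtain ⟨w, hw⟩ := s.exists_notMem
  obtain ⟨p⟩ := hG.preconnected u w
  obtain ⟨d, -, hd₁, hd₂⟩ := p.exists_boundary_dart s hu hw
  exact ⟨d.fst, hd₁, d.snd, hd₂, d.adj⟩

theorem card_filter_adj_lt_degree [DecidableRel G.Adj] {v w : V} [Fintype (G.neighborSet v)]
    {s : Finset V} (hw : w ∉ s) (hvw : G.Adj v w) : #{x ∈ s | G.Adj v x} < G.degree v := by
  rw [← card_neighborFinset_eq_degree]
  refine card_lt_card ⟨fun x hx ↦ ?_, fun h ↦ hw (mem_filter.1 (h ?_)).1⟩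
  · exact (G.mem_neighborFinset v x).2 (mem_filter.1 hx).2
  · exact (G.mem_neighborFinset v w).2 hvw

theorem colorable_of_forall_finset {k : ℕ}
    (h : ∀ s : Finset V, ∃ c : V → Fin k, ∀ u ∈ s, ∀ v ∈ s, G.Adj u v → c u ≠ c v) :
    G.Colorable k := by
  refine nonempty_hom_of_forall_finite_subgraph_hom fun G' hG' ↦ ?_
  have hc := (h hG'.toFinset).choose_spec
  refine ⟨fun v ↦ (h hG'.toFinset).choose v, fun {u v} huv ↦ ?_⟩
  exact hc u (hG'.mem_toFinset.2 u.2) v (hG'.mem_toFinset.2 v.2) (G'.adj_sub huv)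

theorem update_ne_update_of_adj {α : Type*} [DecidableEq V] {c : V → α} {s : Finset V} {t : V}
    {a : α} (hc : ∀ u ∈ s.erase t, ∀ v ∈ s.erase t, G.Adj u v → c u ≠ c v)
    (ha : ∀ w ∈ s, G.Adj t w → c w ≠ a) {u v : V} (hu : u ∈ s) (hv : v ∈ s) (huv : G.Adj u v) :
    update c t a u ≠ update c t a v := by
  rcases eq_or_ne u t with rfl | hut
  · rw [update_self, update_of_ne huv.ne.symm]
    exact (ha v hv huv).symm
  rcases eq_or_ne v t with rfl | hvt
  · rw [update_self, update_of_ne hut]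
    exact ha u hu huv.symm
  rw [update_of_ne hut, update_of_ne hvt]
  exact hc u (mem_erase.2 ⟨hut, hu⟩) v (mem_erase.2 ⟨hvt, hv⟩) huv

theorem exists_coloring_on_of_forall_exists_card_filter_adj_lt [DecidableRel G.Adj] {k : ℕ}
    (h : ∀ s : Finset V, s.Nonempty → ∃ v ∈ s, #{w ∈ s | G.Adj v w} < k) (s : Finset V) :
    ∃ c : V → Fin k, ∀ u ∈ s, ∀ v ∈ s, G.Adj u v → c u ≠ c v := by
  classical
  induction s using Finset.strongInduction with | H s ih =>
  rcases s.eq_empty_or_nonempty with rfl | hs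
  · refine ⟨fun v ↦ ⟨0, ?_⟩, by simp⟩
    obtain ⟨_, _, hk⟩ := h {v} (singleton_nonempty v)
    exact (Nat.zero_le _).trans_lt hk
  obtain ⟨t, ht, hdeg⟩ := h s hs
  obtain ⟨c, hc⟩ := ih (s.erase t) (erase_ssubset ht)
  obtain ⟨a, -, ha⟩ := exists_mem_notMem_of_card_lt_card
    (s := image c {w ∈ s | G.Adj t w}) (t := univ)
    (card_image_le.trans_lt (hdeg.trans_eq (card_fin k).symm))
  refine ⟨update c t a, fun u hu v hv huv ↦ update_ne_update_of_adj hc ?_ hu hv huv⟩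
  exact fun w hw htw hwa ↦ ha (mem_image.2 ⟨w, mem_filter.2 ⟨hw, htw⟩, hwa⟩)

end SimpleGraph

open SimpleGraph

/-- Behzad–Radjavi: a connected infinite graph with all degrees at most `b` has
chromatic number at most `b`. -/
theorem stmt_7 {V : Type*} [Infinite V] (G : SimpleGraph V) [G.LocallyFinite]
    (hconn : G.Connected) (b : ℕ) (hdeg : ∀ v, G.degree v ≤ b) :
    G.chromaticNumber ≤ b := by
  classical
  rw [chromaticNumber_le_iff_colorable]
  refine colorable_of_forall_finset
    (exists_coloring_on_of_forall_exists_card_filter_adj_lt fun s hs ↦ ?_)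
  obtain ⟨v, hv, w, hw, hvw⟩ := hconn.exists_adj_notMem_of_infinite hs
  exact ⟨v, hv, (card_filter_adj_lt_degree hw hvw).trans_le (hdeg v)⟩
end

section
/- Let s be a positive integer and H a finite simple graph such that no vertex of H has s distinct neighbors each of degree greater than or equal to its own degree. Then χ(H) ≤ s. -/
/-!
Colour the vertices greedily in order of non-increasing degree. When a vertex `v` is coloured,
its already coloured neighbours have degree at least `deg v`, so by hypothesis there are fewer
than `s` of them and one of the colours `0, …, s - 1` is still free for `v`.
-/

open Finset

theorem Finset.card_filter_lt_of_not_exists_embedding {V : Type*} [Fintype V] {p : V → Prop}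
    [DecidablePred p] {s : ℕ} (h : ¬∃ w : Fin s ↪ V, ∀ i, p (w i)) : #{v | p v} < s := by
  by_contra! hle
  have hcard : Fintype.card (Fin s) ≤ Fintype.card {v // p v} := by
    simpa [Fintype.card_subtype] using hle
  obtain ⟨w⟩ := Function.Embedding.nonempty_of_card_le hcard
  exact h ⟨w.trans (Function.Embedding.subtype p), fun i => (w i).2⟩

namespace SimpleGraph

variable {V α : Type*} [Fintype V] [LinearOrder α] (G : SimpleGraph V) [DecidableRel G.Adj]

theorem exists_properOn_of_card_adj_le_lt (f : V → α) {s : ℕ}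
    (h : ∀ v, #{w | G.Adj v w ∧ f v ≤ f w} < s) (S : Finset V) :
    ∃ C : V → ℕ, (∀ u ∈ S, C u < s) ∧ (S : Set V).Pairwise fun u w => G.Adj u w → C u ≠ C w := by
  classical
  induction S using Finset.induction_on_min_value f with
  | empty => exact ⟨0, by simp, by simp⟩
  | insert v T hvT hmin ih =>
    obtain ⟨C, hlt, hproper⟩ := ih
    have hfew : #((T.filter (G.Adj v)).image C) < #(range s) := calc
      #((T.filter (G.Adj v)).image C) ≤ #(T.filter (G.Adj v)) := card_image_le
      _ ≤ #{w | G.Adj v w ∧ f v ≤ f w} := card_le_card fun w hw => by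
        simp only [mem_filter, mem_univ, true_and] at hw ⊢
        exact ⟨hw.2, hmin w hw.1⟩
      _ < #(range s) := by simpa using h v
    obtain ⟨c, hcs, hc⟩ := exists_mem_notMem_of_card_lt_card hfew
    have hupdate : ∀ u ∈ T, Function.update C v c u = C u := fun u hu =>
      Function.update_of_ne (ne_of_mem_of_not_mem hu hvT) c C
    refine ⟨Function.update C v c, ?_, ?_⟩
    · intro u hu
      rcases mem_insert.mp hu with rfl | hu
      · simpa using hcs
      · rw [hupdate u hu]
        exact hlt u hu
    · rw [coe_insert]
      refine Set.Pairwise.insert (fun u hu w hw huw hadj => ?_) fun w hw _ => ?_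
      · rw [hupdate u hu, hupdate w hw]
        exact hproper hu hw huw hadj
      · have hfree : G.Adj v w → C w ≠ c := fun hadj hcw =>
          hc (mem_image.mpr ⟨w, mem_filter.mpr ⟨hw, hadj⟩, hcw⟩)
        simp only [Function.update_self, hupdate w hw]
        exact ⟨fun hadj => (hfree hadj).symm, fun hadj => hfree hadj.symm⟩

theorem colorable_of_card_adj_le_lt (f : V → α) {s : ℕ}
    (h : ∀ v, #{w | G.Adj v w ∧ f v ≤ f w} < s) : G.Colorable s := by
  obtain ⟨C, hlt, hproper⟩ := G.exists_properOn_of_card_adj_le_lt f h univ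
  exact ⟨Coloring.mk (fun v => ⟨C v, hlt v (mem_univ v)⟩) fun hadj =>
    Fin.val_ne_iff.mp (hproper (mem_univ _) (mem_univ _) hadj.ne hadj)⟩

end SimpleGraph

theorem stmt_9_general {V : Type*} [Fintype V] (H : SimpleGraph V) [DecidableRel H.Adj]
    (s : ℕ)
    (hyp : ∀ v : V, ¬∃ w : Fin s ↪ V,
      ∀ i, H.Adj v (w i) ∧ H.degree v ≤ H.degree (w i)) :
    H.chromaticNumber ≤ s := by
  refine (H.colorable_of_card_adj_le_lt (fun v => H.degree v) fun v => ?_).chromaticNumber_le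
  exact card_filter_lt_of_not_exists_embedding (hyp v)

/-- Corollary 2.9: if no vertex of a finite graph `H` has `s` distinct neighbours each
of degree at least its own, then `χ(H) ≤ s`. -/
theorem stmt_9 {V : Type*} [Fintype V] (H : SimpleGraph V) [DecidableRel H.Adj]
    (s : ℕ) (hs : 0 < s)
    (hyp : ∀ v : V, ¬∃ w : Fin s ↪ V,
      ∀ i, H.Adj v (w i) ∧ H.degree v ≤ H.degree (w i)) :
    H.chromaticNumber ≤ s :=
  stmt_9_general H s hyp
end

section
/- Let G be an infinite graph and m a natural number. Then χ(G) ≤ m if and only if every finite subgraph H of G satisfies χ(H) ≤ m. -/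
/-- De Bruijn–Erdős: for an infinite graph `G`, `χ(G) ≤ m` iff every finite
(induced) subgraph `H` of `G` has `χ(H) ≤ m`. -/
theorem stmt_10 {V : Type*} [Infinite V] (G : SimpleGraph V) (m : ℕ) :
    G.chromaticNumber ≤ m ↔
      ∀ s : Finset V, (G.induce (s : Set V)).chromaticNumber ≤ m := by
  simp only [SimpleGraph.chromaticNumber_le_iff_colorable]
  constructor
  · intro h s
    exact SimpleGraph.Colorable.of_hom (SimpleGraph.Embedding.induce (s : Set V)).toHom h
  · intro h
    have key : ∀ G' : G.Subgraph, G'.verts.Finite →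
        G'.coe →g (SimpleGraph.completeGraph (Fin m)) := by
      intro G' hfin
      have hc := h hfin.toFinset
      let c := hc.some
      have f : G'.coe →g G.induce (hfin.toFinset : Set V) := by
        refine ⟨fun v => ⟨v.1, by simp [hfin.mem_toFinset]⟩, ?_⟩
        intro a b hab
        exact G'.adj_sub hab
      exact (c : G.induce (hfin.toFinset : Set V) →g _).comp f
    obtain ⟨f⟩ := SimpleGraph.nonempty_hom_of_forall_finite_subgraph_hom key
    exact ⟨f⟩
end

section
/- Let f : ℝ → ℝ be non-negative, twice continuously differentiable, with f'' α-Hölder continuous of semi-norm L. Then for all x ∈ ℝ and all λ > 0, 0 ≤ f(x) + (λ²/2) f''(x) + (L/2) λ^{2+α}, hence −f''(x) ≤ (2/λ²) f(x) + L λ^{α}. -/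
open Set

lemma iterW1 {f : ℝ → ℝ} (hf : ContDiff ℝ 2 f) {a b y : ℝ} (hab : a < b)
    (hy : y ∈ Icc a b) : iteratedDerivWithin 1 f (Icc a b) y = deriv f y := by
  rw [iteratedDerivWithin_succ, iteratedDerivWithin_zero]
  exact DifferentiableAt.derivWithin (hf.differentiable (by norm_num) y)
    ((uniqueDiffOn_Icc hab) y hy)

lemma iterW2 {f : ℝ → ℝ} (hf : ContDiff ℝ 2 f) {a b y : ℝ} (hab : a < b)
    (hy : y ∈ Icc a b) : iteratedDerivWithin 2 f (Icc a b) y = deriv (deriv f) y := by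
  have hd1 : Differentiable ℝ (deriv f) := by
    have h2 : ContDiff ℝ (1+1 : WithTop ℕ∞) f := by rw [one_add_one_eq_two]; exact hf
    exact ((contDiff_succ_iff_deriv.mp h2).2.2).differentiable (by norm_num)
  rw [iteratedDerivWithin_succ]
  rw [derivWithin_congr (fun z hz => iterW1 hf hab hz) (iterW1 hf hab hy)]
  exact DifferentiableAt.derivWithin (hd1 y) ((uniqueDiffOn_Icc hab) y hy)

lemma taylor2 {f : ℝ → ℝ} (hf : ContDiff ℝ 2 f) {a b : ℝ} (hab : a < b) :
    ∃ ξ ∈ Ioo a b, f b = f a + deriv f a * (b - a) + deriv (deriv f) ξ * (b - a) ^ 2 / 2 := by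
  have hcd : ContDiffOn ℝ 1 f (Icc a b) := (hf.of_le (by norm_num)).contDiffOn
  have hd1 : Differentiable ℝ (deriv f) := by
    have h2 : ContDiff ℝ (1+1 : WithTop ℕ∞) f := by rw [one_add_one_eq_two]; exact hf
    exact ((contDiff_succ_iff_deriv.mp h2).2.2).differentiable (by norm_num)
  have hdiff : DifferentiableOn ℝ (iteratedDerivWithin 1 f (Icc a b)) (Ioo a b) := by
    intro y hy
    have hy' : y ∈ Icc a b := Ioo_subset_Icc_self hy
    refine ((hd1 y).differentiableWithinAt).congr ?_ ?_
    · exact fun z hz => iterW1 hf hab (Ioo_subset_Icc_self hz)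
    · exact iterW1 hf hab hy'
  have htl := taylor_mean_remainder_lagrange (n := 1) hab.ne (by rwa [uIcc_of_le hab.le])
    (by rwa [uIcc_of_le hab.le, uIoo_of_le hab.le])
  rw [uIcc_of_le hab.le, uIoo_of_le hab.le] at htl
  obtain ⟨ξ, hξ, h⟩ := htl
  refine ⟨ξ, hξ, ?_⟩
  rw [iterW2 hf hab (Ioo_subset_Icc_self hξ)] at h
  have ht : taylorWithinEval f 1 (Icc a b) a b = f a + deriv f a * (b - a) := by
    simp [taylorWithinEval_succ, iterW1 hf hab (left_mem_Icc.mpr hab.le)]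
    ring
  rw [ht] at h
  norm_num at h
  linarith

/-- For nonnegative `f ∈ C^{2,α}(ℝ)` with `[f'']_α ≤ L`: for every `x` and `λ > 0`,
`0 ≤ f x + (λ²/2) f''(x) + (L/2) λ^(2+α)`, hence `−f''(x) ≤ (2/λ²) f x + L λ^α`. -/
theorem stmt_12 (f : ℝ → ℝ) (α L : ℝ) (hα : 0 < α) (hα1 : α ≤ 1)
    (hf : ContDiff ℝ 2 f) (hf0 : ∀ x, 0 ≤ f x)
    (hL : ∀ x y, |deriv (deriv f) x - deriv (deriv f) y| ≤ L * |x - y| ^ α)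
    (x lam : ℝ) (hlam : 0 < lam) :
    0 ≤ f x + lam ^ 2 / 2 * deriv (deriv f) x + L / 2 * lam ^ (2 + α) ∧
      -deriv (deriv f) x ≤ 2 / lam ^ 2 * f x + L * lam ^ α := by
  set D := deriv (deriv f)
  -- L ≥ 0
  have hL0 : 0 ≤ L := by
    have := hL 0 1
    simp at this
    calc (0:ℝ) ≤ |D 0 - D 1| := abs_nonneg _
    _ ≤ L := by simpa using this
  -- Hölder bound near x
  have hnear : ∀ ξ, |ξ - x| ≤ lam → D ξ ≤ D x + L * lam ^ α := by
    intro ξ hξ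
    have h1 := hL ξ x
    have h2 : L * |ξ - x| ^ α ≤ L * lam ^ α := by
      apply mul_le_mul_of_nonneg_left _ hL0
      exact Real.rpow_le_rpow (abs_nonneg _) hξ hα.le
    have := (abs_le.mp (h1.trans h2)).1
    linarith [(abs_le.mp (h1.trans h2)).2]
  -- Taylor on [x, x+lam]
  obtain ⟨ξ₁, hξ₁, he₁⟩ := taylor2 hf (show x < x + lam by linarith)
  -- Taylor for the reflected function on [x, x+lam]
  set g : ℝ → ℝ := fun t => f (2 * x - t) with hg
  have hgc : ContDiff ℝ 2 g := hf.comp ((contDiff_const).sub contDiff_id)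
  have hgd : ∀ t, deriv g t = -deriv f (2 * x - t) := by
    intro t; exact deriv_comp_const_sub f (2 * x) t
  have hgd2 : ∀ t, deriv (deriv g) t = D (2 * x - t) := by
    intro t
    have : deriv g = fun t => -deriv f (2 * x - t) := funext hgd
    rw [this]
    rw [deriv.fun_neg]
    rw [deriv_comp_const_sub (deriv f) (2 * x) t]
    ring
  obtain ⟨ξ₂, hξ₂, he₂⟩ := taylor2 hgc (show x < x + lam by linarith)
  rw [hgd2] at he₂
  have hgx : g x = f x := by simp [hg]; ring_nf
  have hgxl : g (x + lam) = f (x - lam) := by simp [hg]; ring_nf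
  have hgdx : deriv g x = -deriv f x := by rw [hgd]; ring_nf
  -- sum
  have hb1 : D ξ₁ ≤ D x + L * lam ^ α := by
    apply hnear; rw [abs_sub_le_iff]; constructor <;> [linarith [hξ₁.1, hξ₁.2]; linarith [hξ₁.1]]
  have hb2 : D (2 * x - ξ₂) ≤ D x + L * lam ^ α := by
    apply hnear; rw [abs_sub_le_iff]; constructor <;> [linarith [hξ₂.1]; linarith [hξ₂.2]]
  have hsum : 0 ≤ f (x + lam) + f (x - lam) := add_nonneg (hf0 _) (hf0 _)
  rw [he₁] at hsum
  rw [hgx, hgxl, hgdx] at he₂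
  rw [he₂] at hsum
  have hpow : lam ^ (2 + α) = lam ^ 2 * lam ^ α := by
    rw [Real.rpow_add hlam]
    norm_num [Real.rpow_two, Real.rpow_natCast]
  have key : 0 ≤ f x + lam ^ 2 / 2 * D x + L / 2 * lam ^ (2 + α) := by
    rw [hpow]
    nlinarith [hb1, hb2, sq_nonneg lam, mul_pos hlam hlam]
  refine ⟨key, ?_⟩
  rw [hpow] at key
  have hl2 : (0:ℝ) < lam ^ 2 := by positivity
  have key2 : 0 ≤ (2 / lam ^ 2) * (f x + lam ^ 2 / 2 * D x + L / 2 * (lam ^ 2 * lam ^ α)) :=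
    mul_nonneg (by positivity) key
  have hexp : (2 / lam ^ 2) * (f x + lam ^ 2 / 2 * D x + L / 2 * (lam ^ 2 * lam ^ α))
      = 2 / lam ^ 2 * f x + D x + L * lam ^ α := by
    field_simp
  rw [hexp] at key2
  linarith
end

section
/- Let P be a non-negative homogeneous polynomial on ℝⁿ of even degree k that is not a sum of squares of polynomials, and let α > 0. Then P is not a finite sum of squares of functions g with g ∈ C^{k/2}(ℝⁿ) (i.e. g is k/2-times continuously differentiable). In particular P is not a sum of squares of functions in the half-regular Hölder space C^{(k+α)/2}(ℝⁿ). -/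
open MvPolynomial Filter Topology

/-- Taylor limit: if `φ` is `C^h` and all derivatives of order `< h` vanish at `0`,
then `φ t / t ^ h` tends to `iteratedDeriv h φ 0 / h!`. -/
private lemma sos_lemB : ∀ (h : ℕ) (φ : ℝ → ℝ), ContDiff ℝ h φ →
    (∀ d, d < h → iteratedDeriv d φ 0 = 0) →
    Tendsto (fun t => φ t / t ^ h) (𝓝[≠] (0:ℝ))
      (𝓝 (iteratedDeriv h φ 0 / (Nat.factorial h : ℝ))) := by
  intro h
  induction h with
  | zero =>
      intro φ hφ _
      simp only [pow_zero, div_one, iteratedDeriv_zero, Nat.factorial_zero, Nat.cast_one]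
      exact (hφ.continuous.tendsto 0).mono_left nhdsWithin_le_nhds
  | succ h ih =>
      intro φ hφ hvan
      have hφ' : ContDiff ℝ h (deriv φ) := by
        have : ContDiff ℝ ((h : WithTop ℕ∞) + 1) φ := by exact_mod_cast hφ
        exact (contDiff_succ_iff_deriv.mp this).2.2
      have hdiff : Differentiable ℝ φ := by
        have : ContDiff ℝ ((h : WithTop ℕ∞) + 1) φ := by exact_mod_cast hφ
        exact (contDiff_succ_iff_deriv.mp this).1
      have key := ih (deriv φ) hφ' (fun d hd => by
        rw [← iteratedDeriv_succ']
        exact hvan (d + 1) (by omega))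
      apply deriv.lhopital_zero_nhdsNE (g := fun t : ℝ => t ^ (h + 1))
      · exact Eventually.of_forall fun t => hdiff t
      · filter_upwards [self_mem_nhdsWithin] with t (ht : t ≠ 0)
        simp [deriv_pow_field, ht, Nat.succ_ne_zero]
        exact Nat.cast_add_one_ne_zero h
      · have h0 : φ 0 = 0 := by
          have := hvan 0 (Nat.succ_pos h); simpa using this
        have := (hφ.continuous.tendsto 0).mono_left
          (nhdsWithin_le_nhds (s := {(0:ℝ)}ᶜ))
        rwa [h0] at this
      · have : Tendsto (fun t : ℝ => t ^ (h + 1)) (𝓝 0) (𝓝 ((0:ℝ) ^ (h + 1))) :=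
          (continuous_pow (h+1)).tendsto 0
        simpa using this.mono_left nhdsWithin_le_nhds
      · have heq : (fun t : ℝ => deriv φ t / deriv (fun t : ℝ => t ^ (h + 1)) t)
            = fun t : ℝ => (deriv φ t / t ^ h) / ((h : ℝ) + 1) := by
          funext t
          rw [deriv_pow_field]
          rw [div_div]
          congr 1
          push_cast
          ring
        rw [heq]
        have := key.div_const ((h : ℝ) + 1)
        convert this using 2
        rw [iteratedDeriv_succ', div_div, Nat.factorial_succ]
        push_cast
        ring_nf

/-- If `φ` is `C^h` and `|φ t| ≤ M |t|^h`, then all derivatives of order `< h` vanish at `0`. -/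
private lemma sos_lemC (h : ℕ) (φ : ℝ → ℝ) (M : ℝ) (hφ : ContDiff ℝ h φ)
    (hbd : ∀ t, |φ t| ≤ M * |t| ^ h) :
    ∀ e, e < h → iteratedDeriv e φ 0 = 0 := by
  intro e
  induction e using Nat.strong_induction_on with
  | _ e ih =>
    intro he
    have hφe : ContDiff ℝ e φ := hφ.of_le (by exact_mod_cast Nat.le_of_lt he)
    have hlim := sos_lemB e φ hφe (fun d hd => ih d hd (hd.trans he))
    have hlim0 : Tendsto (fun t => φ t / t ^ e) (𝓝[≠] (0:ℝ)) (𝓝 0) := by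
      apply squeeze_zero_norm' (a := fun t => M * |t| ^ (h - e))
      · filter_upwards [self_mem_nhdsWithin] with t (ht : t ≠ 0)
        have htpos : (0:ℝ) < |t| ^ e := pow_pos (abs_pos.mpr ht) e
        have h1 : |φ t / t ^ e| = |φ t| / |t| ^ e := by
          rw [abs_div, abs_pow]
        rw [Real.norm_eq_abs, h1, div_le_iff₀ htpos]
        calc |φ t| ≤ M * |t| ^ h := hbd t
          _ = M * |t| ^ (h - e) * |t| ^ e := by
              rw [mul_assoc, ← pow_add]
              congr 2
              omega
      · have : Tendsto (fun t : ℝ => M * |t| ^ (h - e)) (𝓝 0) (𝓝 (M * |(0:ℝ)| ^ (h - e))) :=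
          (tendsto_const_nhds.mul ((continuous_abs.pow (h - e)).tendsto 0))
        have hz : M * |(0:ℝ)| ^ (h - e) = 0 := by
          rw [abs_zero, zero_pow (by omega : h - e ≠ 0), mul_zero]
        rw [hz] at this
        exact this.mono_left nhdsWithin_le_nhds
    have := tendsto_nhds_unique hlim hlim0
    have hfac : (Nat.factorial e : ℝ) ≠ 0 := Nat.cast_ne_zero.mpr (Nat.factorial_ne_zero e)
    field_simp at this
    simpa using this

/-- If `φ` is `C^h` and `|φ t| ≤ M |t|^h`, then `φ t / t^h → iteratedDeriv h φ 0 / h!`. -/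
private lemma sos_lemA (h : ℕ) (φ : ℝ → ℝ) (M : ℝ) (hφ : ContDiff ℝ h φ)
    (hbd : ∀ t, |φ t| ≤ M * |t| ^ h) :
    Tendsto (fun t => φ t / t ^ h) (𝓝[≠] (0:ℝ))
      (𝓝 (iteratedDeriv h φ 0 / (Nat.factorial h : ℝ))) :=
  sos_lemB h φ hφ (sos_lemC h φ M hφ hbd)

/-- Evaluation of a homogeneous polynomial at a scaled point. -/
private lemma sos_eval_mul_hom {n k : ℕ} (P : MvPolynomial (Fin n) ℝ) (hP : P.IsHomogeneous k)
    (t : ℝ) (x : Fin n → ℝ) :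
    eval (fun i => t * x i) P = t ^ k * eval x P := by
  rw [eval_eq, eval_eq, Finset.mul_sum]
  refine Finset.sum_congr rfl fun d hd => ?_
  have hdeg : (∑ i ∈ d.support, d i) = k := by
    have h1 := hP (MvPolynomial.mem_support_iff.mp hd)
    change Finsupp.weight (fun _ => 1) d = k at h1
    rw [← Finsupp.degree_eq_weight_one] at h1
    simpa [Finsupp.degree_apply] using h1
  calc coeff d P * ∏ i ∈ d.support, (t * x i) ^ d i
      = coeff d P * ((∏ i ∈ d.support, t ^ d i) * ∏ i ∈ d.support, x i ^ d i) := by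
        rw [← Finset.prod_mul_distrib]
        simp [mul_pow]
    _ = t ^ k * (coeff d P * ∏ i ∈ d.support, x i ^ d i) := by
        rw [Finset.prod_pow_eq_pow_sum, hdeg]
        ring

/-- Expansion of a continuous multilinear map on a diagonal vector in coordinates. -/
private lemma sos_expand {n h : ℕ}
    (F : ContinuousMultilinearMap ℝ (fun _ : Fin h => EuclideanSpace ℝ (Fin n)) ℝ)
    (x : Fin n → ℝ) :
    F (fun _ => ∑ i : Fin n, x i • EuclideanSpace.single i (1:ℝ))
      = ∑ r : Fin h → Fin n,
          (∏ a, x (r a)) * F (fun a => EuclideanSpace.single (r a) (1:ℝ)) := by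
  have h1 := F.toMultilinearMap.map_sum
    (g := fun (_ : Fin h) (i : Fin n) => x i • EuclideanSpace.single i (1:ℝ))
  simp only [ContinuousMultilinearMap.coe_coe] at h1
  rw [h1]
  refine Finset.sum_congr rfl fun r _ => ?_
  have h2 := F.toMultilinearMap.map_smul_univ (fun a => x (r a))
    (fun a => EuclideanSpace.single (r a) (1:ℝ))
  simp only [ContinuousMultilinearMap.coe_coe] at h2
  rw [h2]
  simp [smul_eq_mul]

private lemma sos_sum_single {n : ℕ} (x' : EuclideanSpace ℝ (Fin n)) :
    x' = ∑ i : Fin n, x' i • EuclideanSpace.single i (1:ℝ) := by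
  ext j
  have := Finset.sum_apply j Finset.univ
    (fun i => x' i • (EuclideanSpace.single i (1:ℝ) : Fin n → ℝ))
  simp only [this]
  simp [EuclideanSpace.single_apply, Pi.single_apply]

private lemma sos_line_deriv {n h : ℕ} (g : EuclideanSpace ℝ (Fin n) → ℝ)
    (hg : ContDiff ℝ (h : ℕ∞) g) (x' : EuclideanSpace ℝ (Fin n)) :
    iteratedDeriv h (fun t : ℝ => g (t • x')) 0
      = iteratedFDeriv ℝ h g 0 (fun _ : Fin h => x') := by
  have hc : (fun t : ℝ => g (t • x'))
      = g ∘ (ContinuousLinearMap.toSpanSingleton ℝ x') := by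
    funext t; simp [ContinuousLinearMap.toSpanSingleton_apply]
  rw [hc, iteratedDeriv_eq_iteratedFDeriv,
    ContinuousLinearMap.iteratedFDeriv_comp_right _ hg _ (le_refl _)]
  simp [ContinuousLinearMap.toSpanSingleton_apply]

/-- Corollary 7.2: a nonnegative homogeneous polynomial of even degree `k` that is not a
sum of squares of polynomials is not a finite sum of squares of `C^{k/2}` functions. -/
theorem stmt_16 {n k : ℕ} (hk : Even k) (P : MvPolynomial (Fin n) ℝ)
    (hP : P.IsHomogeneous k) (hpos : ∀ x : Fin n → ℝ, 0 ≤ eval x P)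
    (hnotsos : ¬∃ (m : ℕ) (q : Fin m → MvPolynomial (Fin n) ℝ), P = ∑ j, (q j) ^ 2) :
    ¬∃ (m : ℕ) (g : Fin m → EuclideanSpace ℝ (Fin n) → ℝ),
      (∀ j, ContDiff ℝ ((k / 2 : ℕ) : ℕ∞) (g j)) ∧
        ∀ x : EuclideanSpace ℝ (Fin n), eval (fun i => x i) P = ∑ j, (g j x) ^ 2 := by
  rintro ⟨m, g, hgc, hgeq⟩
  apply hnotsos
  obtain ⟨r, hr⟩ := hk
  set h : ℕ := k / 2 with hh
  have hk2 : 2 * h = k := by omega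
  let F : Fin m → ContinuousMultilinearMap ℝ (fun _ : Fin h => EuclideanSpace ℝ (Fin n)) ℝ :=
    fun j => iteratedFDeriv ℝ h (g j) 0
  let q : Fin m → MvPolynomial (Fin n) ℝ := fun j =>
    ((h.factorial : ℝ))⁻¹ •
      ∑ r : Fin h → Fin n,
        (F j (fun a => EuclideanSpace.single (r a) (1:ℝ))) • ∏ a, X (r a)
  refine ⟨m, q, MvPolynomial.funext fun x => ?_⟩
  set x' : EuclideanSpace ℝ (Fin n) := (WithLp.equiv 2 (Fin n → ℝ)).symm x with hx'
  set Px := eval x P with hPx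
  have hPx0 : 0 ≤ Px := hpos x
  -- the restriction of the identity to the line through x'
  have hsum : ∀ t : ℝ, ∑ j, (g j (t • x'))^2 = t ^ k * Px := by
    intro t
    have h1 := hgeq (t • x')
    rw [show (fun i => (t • x') i) = fun i => t * x i from rfl] at h1
    rw [sos_eval_mul_hom P hP t x] at h1
    exact h1.symm
  have hbd : ∀ j t, |g j (t • x')| ≤ Real.sqrt Px * |t| ^ h := by
    intro j t
    have h1 : (g j (t • x'))^2 ≤ t ^ k * Px := by
      rw [← hsum t]
      exact Finset.single_le_sum (f := fun j => (g j (t • x'))^2)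
        (fun j _ => sq_nonneg _) (Finset.mem_univ j)
    have h2 : t ^ k * Px = (Real.sqrt Px * |t| ^ h)^2 := by
      rw [mul_pow, Real.sq_sqrt hPx0, ← pow_mul, mul_comm h 2, hk2, ← abs_pow]
      rw [abs_of_nonneg (Even.pow_nonneg ⟨r, hr⟩ t)]
      ring
    exact abs_le_of_sq_le_sq (by rw [← h2]; exact h1) (by positivity)
  have hφc : ∀ j, ContDiff ℝ (h : ℕ∞) (fun t : ℝ => g j (t • x')) := by
    intro j
    have hcomp : (fun t : ℝ => g j (t • x'))
        = (g j) ∘ (ContinuousLinearMap.toSpanSingleton ℝ x') := by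
      funext t; simp [ContinuousLinearMap.toSpanSingleton_apply]
    rw [hcomp]
    exact (hgc j).comp (ContinuousLinearMap.toSpanSingleton ℝ x').contDiff
  set c : Fin m → ℝ :=
    fun j => iteratedDeriv h (fun t : ℝ => g j (t • x')) 0 / (h.factorial : ℝ) with hc
  have htend : ∀ j, Tendsto (fun t => g j (t • x') / t ^ h) (𝓝[≠] (0:ℝ)) (𝓝 (c j)) := by
    intro j
    exact sos_lemA h _ (Real.sqrt Px) (by exact_mod_cast hφc j) (hbd j)
  have hsqt : Tendsto (fun t => ∑ j, (g j (t • x') / t ^ h)^2) (𝓝[≠] (0:ℝ))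
      (𝓝 (∑ j, (c j)^2)) :=
    tendsto_finset_sum _ fun j _ => (htend j).pow 2
  have hconst : (fun t => ∑ j, (g j (t • x') / t ^ h)^2) =ᶠ[𝓝[≠] (0:ℝ)] fun _ => Px := by
    filter_upwards [self_mem_nhdsWithin] with t (ht : t ≠ 0)
    have htk : t ^ k ≠ 0 := pow_ne_zero _ ht
    have h3 : ∑ j, (g j (t • x') / t ^ h)^2 = (∑ j, (g j (t • x'))^2) / t ^ k := by
      rw [Finset.sum_div]
      refine Finset.sum_congr rfl fun j _ => ?_
      rw [div_pow, ← pow_mul, mul_comm h 2, hk2]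
    rw [h3, hsum, mul_comm, mul_div_assoc, div_self htk, mul_one]
  have hPxc : ∑ j, (c j)^2 = Px :=
    tendsto_nhds_unique hsqt ((tendsto_congr' hconst).mpr tendsto_const_nhds)
  have hcq : ∀ j, c j = eval x (q j) := by
    intro j
    have hd : iteratedDeriv h (fun t : ℝ => g j (t • x')) 0
        = F j (fun _ : Fin h => x') := sos_line_deriv (g j) (by exact_mod_cast hgc j) x'
    have hx'' : (fun _ : Fin h => x') =
        fun _ : Fin h => ∑ i : Fin n, x i • EuclideanSpace.single i (1:ℝ) := by
      funext a
      exact sos_sum_single x'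
    have hF : F j (fun _ : Fin h => x')
        = ∑ r : Fin h → Fin n,
            (∏ a, x (r a)) * F j (fun a => EuclideanSpace.single (r a) (1:ℝ)) := by
      rw [hx'']
      exact sos_expand (F j) x
    have heval : eval x (q j)
        = (h.factorial : ℝ)⁻¹ * ∑ r : Fin h → Fin n,
            (F j (fun a => EuclideanSpace.single (r a) (1:ℝ))) * ∏ a, x (r a) := by
      simp only [q, MvPolynomial.smul_eval, map_sum, eval_prod, eval_X]
    rw [hc]
    simp only [hd, hF, heval, div_eq_inv_mul]
    congr 1
    refine Finset.sum_congr rfl fun r _ => ?_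
    ring
  rw [map_sum]
  calc eval x P = ∑ j, (c j)^2 := hPxc.symm
    _ = ∑ j, eval x ((q j)^2) := by
        refine Finset.sum_congr rfl fun j _ => ?_
        rw [hcq j, map_pow]
end
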